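/- arXiv:math/0309474 — 9 statements merged into one kernel-verified Lean document; each statement's English description precedes it below -/
import Mathlib

section
/- There are no nonzero integers u, v, w satisfying u^3 + 3*v^3 + 3*w^3 = 6*u*v*w (equivalently, u^3/3 + v^3 + w^3 - 2*u*v*w = 0). -/
set_option maxHeartbeats 2000000

private lemma cube_inj {a b : ℤ} (h : a ^ 3 = b ^ 3) : a = b :=
  (Odd.strictMono_pow (R := ℤ) ⟨1, by norm_num⟩).injective h

private lemma zmod7_aux : ∀ x y : ZMod 7,
    x ^ 3 + 12 * x ^ 2 * y - 6 * x * y ^ 2 + y ^ 3 = 0 → x = 0 ∧ y = 0 := by decide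

private lemma descent_aux : ∀ n : ℕ, ∀ a b : ℤ, a.natAbs + b.natAbs = n →
    a ^ 3 + 12 * a ^ 2 * b - 6 * a * b ^ 2 + b ^ 3 = 0 → a = 0 := by
  intro n
  induction n using Nat.strong_induction_on with
  | _ n ih =>
    intro a b hn h
    have hcast : (a : ZMod 7) ^ 3 + 12 * (a : ZMod 7) ^ 2 * (b : ZMod 7)
        - 6 * (a : ZMod 7) * (b : ZMod 7) ^ 2 + (b : ZMod 7) ^ 3 = 0 := by
      have := congrArg (fun z : ℤ => (z : ZMod 7)) h
      push_cast at this
      convert this using 2 <;> push_cast <;> ring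
    obtain ⟨ha7, hb7⟩ := zmod7_aux _ _ hcast
    have hda : (7 : ℤ) ∣ a := by
      exact_mod_cast (ZMod.intCast_zmod_eq_zero_iff_dvd a 7).mp ha7
    have hdb : (7 : ℤ) ∣ b := by
      exact_mod_cast (ZMod.intCast_zmod_eq_zero_iff_dvd b 7).mp hb7
    obtain ⟨a1, rfl⟩ := hda
    obtain ⟨b1, rfl⟩ := hdb
    have h343 : (343 : ℤ) * (a1 ^ 3 + 12 * a1 ^ 2 * b1 - 6 * a1 * b1 ^ 2 + b1 ^ 3) = 0 := by
      linear_combination h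
    have h' : a1 ^ 3 + 12 * a1 ^ 2 * b1 - 6 * a1 * b1 ^ 2 + b1 ^ 3 = 0 :=
      (mul_eq_zero.mp h343).resolve_left (by norm_num)
    rcases Nat.eq_zero_or_pos (a1.natAbs + b1.natAbs) with h0 | hpos
    · have : a1 = 0 := by
        omega
      simp [this]
    · have hlt : a1.natAbs + b1.natAbs < n := by
        have h7a : (7 * a1).natAbs = 7 * a1.natAbs := by
          simp [Int.natAbs_mul]
        have h7b : (7 * b1).natAbs = 7 * b1.natAbs := by
          simp [Int.natAbs_mul]
        omega
      have := ih _ hlt a1 b1 rfl h'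
      simp [this]

/-- The diophantine equation u^3/3 + v^3 + w^3 - 2uvw = 0, i.e.
u^3 + 3v^3 + 3w^3 = 6uvw, has no solution in nonzero integers. -/
theorem stmt_0 :
    ¬ ∃ u v w : ℤ, u ≠ 0 ∧ v ≠ 0 ∧ w ≠ 0 ∧
      u ^ 3 + 3 * v ^ 3 + 3 * w ^ 3 = 6 * u * v * w := by
  rintro ⟨u, v, w, hu, hv, hw, hF⟩
  -- The line 2u+3v+3w = 0 meets the cubic only at the flex (0,1,-1), so Z ≠ 0.
  have hZne : (2*u+3*v+3*w) ≠ 0 := by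
    intro hZ0
    have h3 : u ^ 3 = 0 := by
      linear_combination 9*hF - (4*u^2+9*v^2+9*w^2-6*u*v-9*v*w-6*u*w)*hZ0
    exact hu (pow_eq_zero_iff (by norm_num : 3 ≠ 0) |>.mp h3)
  -- Key identity (a 3-isogeny to the Fermat cubic):
  have hK : 27*((v-w)*(u^3 + 6*u*(2*u+3*v+3*w)^2 - 2*(2*u+3*v+3*w)^3))^2*(2*u+3*v+3*w) + 4*(u^3 + 3*u^2*(2*u+3*v+3*w) - 6*u*(2*u+3*v+3*w)^2 + (2*u+3*v+3*w)^3)^3 + 729*(2*u+3*v+3*w)^3*u^6 = 0 := by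
    linear_combination (2916*(36*w^6 + 216*v*w^5 + 540*v^2*w^4 + 720*v^3*w^3 + 540*v^4*w^2 + 216*v^5*w + 36*v^6 + 72*u*w^5 + 360*u*v*w^4 + 720*u*v^2*w^3 + 720*u*v^3*w^2 + 360*u*v^4*w + 72*u*v^5 + 36*u^2*w^4 + 144*u^2*v*w^3 + 216*u^2*v^2*w^2 + 144*u^2*v^3*w + 36*u^2*v^4 - 12*u^3*w^3 - 36*u^3*v*w^2 - 36*u^3*v^2*w - 12*u^3*v^3 - 12*u^4*w^2 - 24*u^4*v*w - 12*u^4*v^2 + u^6))*hF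
  have hmain : (9*u^3*(2*u+3*v+3*w) + ((v-w)*(u^3 + 6*u*(2*u+3*v+3*w)^2 - 2*(2*u+3*v+3*w)^3)))^3 + (9*u^3*(2*u+3*v+3*w) - ((v-w)*(u^3 + 6*u*(2*u+3*v+3*w)^2 - 2*(2*u+3*v+3*w)^3)))^3 = ((-2*u)*(u^3 + 3*u^2*(2*u+3*v+3*w) - 6*u*(2*u+3*v+3*w)^2 + (2*u+3*v+3*w)^3))^3 := by
    linear_combination 2*u^3*hK
  have hFLT : FermatLastTheoremWith ℤ 3 :=
    fermatLastTheoremFor_iff_int.mp fermatLastTheoremThree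
  have hor : (9*u^3*(2*u+3*v+3*w) + ((v-w)*(u^3 + 6*u*(2*u+3*v+3*w)^2 - 2*(2*u+3*v+3*w)^3))) = 0 ∨ (9*u^3*(2*u+3*v+3*w) - ((v-w)*(u^3 + 6*u*(2*u+3*v+3*w)^2 - 2*(2*u+3*v+3*w)^3))) = 0 ∨ ((-2*u)*(u^3 + 3*u^2*(2*u+3*v+3*w) - 6*u*(2*u+3*v+3*w)^2 + (2*u+3*v+3*w)^3)) = 0 := by
    by_contra hcon
    push_neg at hcon
    exact hFLT _ _ _ hcon.1 hcon.2.1 hcon.2.2 hmain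
  have hfinal : ∀ s : ℤ, (s = 1 ∨ s = -1) → ((v-w)*(u^3 + 6*u*(2*u+3*v+3*w)^2 - 2*(2*u+3*v+3*w)^3)) = s * (-(9*u^3*(2*u+3*v+3*w))) →  False := by
    intro s hs hNYeq
    have h4 : 4*(u^3 + 3*u^2*(2*u+3*v+3*w) - 6*u*(2*u+3*v+3*w)^2 + (2*u+3*v+3*w)^3)^3 = 4*(-(9*u^2*(2*u+3*v+3*w)))^3 := by
      rcases hs with rfl | rfl
      · linear_combination hK - 27*(2*u+3*v+3*w)*(((v-w)*(u^3 + 6*u*(2*u+3*v+3*w)^2 - 2*(2*u+3*v+3*w)^3)) - 9*u^3*(2*u+3*v+3*w))*hNYeq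
      · linear_combination hK - 27*(2*u+3*v+3*w)*(((v-w)*(u^3 + 6*u*(2*u+3*v+3*w)^2 - 2*(2*u+3*v+3*w)^3)) + 9*u^3*(2*u+3*v+3*w))*hNYeq
    have h5 : (u^3 + 3*u^2*(2*u+3*v+3*w) - 6*u*(2*u+3*v+3*w)^2 + (2*u+3*v+3*w)^3)^3 = (-(9*u^2*(2*u+3*v+3*w)))^3 := by linarith
    have h6 : (u^3 + 3*u^2*(2*u+3*v+3*w) - 6*u*(2*u+3*v+3*w)^2 + (2*u+3*v+3*w)^3) = -(9*u^2*(2*u+3*v+3*w)) := cube_inj h5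
    have h7 : u ^ 3 + 12 * u ^ 2 * (2*u+3*v+3*w) - 6 * u * (2*u+3*v+3*w) ^ 2 + (2*u+3*v+3*w) ^ 3 = 0 := by
      linear_combination h6
    exact hu (descent_aux _ u (2*u+3*v+3*w) rfl h7)
  rcases hor with hA | hB | hC
  · exact hfinal 1 (Or.inl rfl) (by linear_combination hA)
  · exact hfinal (-1) (Or.inr rfl) (by linear_combination -hB)
  · rcases mul_eq_zero.mp hC with h1 | hNX0
    · have : u = 0 := by omega
      exact hu this
    · have h5 : (27*(2*u+3*v+3*w)) * (((v-w)*(u^3 + 6*u*(2*u+3*v+3*w)^2 - 2*(2*u+3*v+3*w)^3))^2 + 27*((2*u+3*v+3*w)*u^3)^2) = 0 := by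
        linear_combination hK - 4*(u^3 + 3*u^2*(2*u+3*v+3*w) - 6*u*(2*u+3*v+3*w)^2 + (2*u+3*v+3*w)^3)^2*hNX0
      rcases mul_eq_zero.mp h5 with h6 | h7
      · exact hZne (by omega)
      · have h8 : ((2*u+3*v+3*w)*u^3)^2 = 0 := by nlinarith [sq_nonneg ((v-w)*(u^3 + 6*u*(2*u+3*v+3*w)^2 - 2*(2*u+3*v+3*w)^3))]
        have h9 := pow_eq_zero_iff (by norm_num : 2 ≠ 0) |>.mp h8
        rcases mul_eq_zero.mp h9 with h10 | h11
        · exact hZne h10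
        · exact hu (pow_eq_zero_iff (by norm_num : 3 ≠ 0) |>.mp h11)
end

section
/- Let x, y be integers with gcd(x, y) = 1 and 3 ∣ (x + y). Then 3 divides x^2 - x*y + y^2 but 9 does not divide x^2 - x*y + y^2. -/
/-- If gcd(x,y) = 1 and 3 ∣ x + y, then 3 exactly divides x² - xy + y². -/
theorem stmt_5 (x y : ℤ) (hxy : Int.gcd x y = 1) (h3 : (3 : ℤ) ∣ (x + y)) :
    (3 : ℤ) ∣ (x ^ 2 - x * y + y ^ 2) ∧ ¬ (9 : ℤ) ∣ (x ^ 2 - x * y + y ^ 2) := by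
  obtain ⟨k, hk⟩ := h3
  have key : x ^ 2 - x * y + y ^ 2 = (x + y) ^ 2 - 3 * (x * y) := by ring
  constructor
  · rw [key, hk]; exact ⟨3 * k ^ 2 - x * y, by ring⟩
  · intro ⟨m, hm⟩
    have h9 : (9 : ℤ) ∣ (x + y) ^ 2 := ⟨k ^ 2, by rw [hk]; ring⟩
    have h3xy : (3 : ℤ) ∣ x * y := by
      have : (9 : ℤ) ∣ 3 * (x * y) := by
        obtain ⟨n, hn⟩ := h9
        exact ⟨n - m, by rw [key] at hm; omega⟩
      omega
    have hp : Prime (3 : ℤ) := by norm_num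
    rcases hp.dvd_mul.mp h3xy with hx | hy
    · have hyd : (3 : ℤ) ∣ y := by omega
      have := Int.dvd_gcd hx hyd
      rw [hxy] at this
      norm_num at this
    · have hxd : (3 : ℤ) ∣ x := by omega
      have := Int.dvd_gcd hxd hy
      rw [hxy] at this
      norm_num at this
end

section
/- Let a, b, c, d be integers whose binary cubic form f(x,y) = a*x^3 + b*x^2*y + c*x*y^2 + d*y^3 has discriminant D = 1. Then f is GL_2(ℤ)-equivalent to the form xy(x+y) or to the form xy(x-y); that is, there exist integers p, q, r, s with p*s - q*r = 1 or p*s - q*r = -1 such that for all integers x, y, f(p*x + q*y, r*x + s*y) = x^2*y + x*y^2 or f(p*x + q*y, r*x + s*y) = x^2*y - x*y^2. -/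
/-- GL₂(ℤ)-equivalence of binary cubic forms (as coefficient quadruples). -/
def Eqv (a b c d a' b' c' d' : ℤ) : Prop :=
  ∃ p q r s : ℤ, (p * s - q * r = 1 ∨ p * s - q * r = -1) ∧
    ∀ x y : ℤ,
      a * (p * x + q * y) ^ 3 + b * (p * x + q * y) ^ 2 * (r * x + s * y)
        + c * (p * x + q * y) * (r * x + s * y) ^ 2 + d * (r * x + s * y) ^ 3
      = a' * x ^ 3 + b' * x ^ 2 * y + c' * x * y ^ 2 + d' * y ^ 3

lemma eqv_trans {a b c d e f g h i j k l : ℤ}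
    (h1 : Eqv a b c d e f g h) (h2 : Eqv e f g h i j k l) :
    Eqv a b c d i j k l := by
  obtain ⟨p, q, r, s, hdet, hfun⟩ := h1
  obtain ⟨p', q', r', s', hdet', hfun'⟩ := h2
  refine ⟨p * p' + q * r', p * q' + q * s', r * p' + s * r', r * q' + s * s', ?_, ?_⟩
  · have : (p * p' + q * r') * (r * q' + s * s') - (p * q' + q * s') * (r * p' + s * r')
        = (p * s - q * r) * (p' * s' - q' * r') := by ring
    rcases hdet with h1 | h1 <;> rcases hdet' with h2 | h2 <;>
      [left; right; right; left] <;> rw [this, h1, h2] <;> ring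
  · intro x y
    linear_combination hfun (p' * x + q' * y) (r' * x + s' * y) + hfun' x y

lemma eqv_T (a b c d t : ℤ) :
    Eqv a b c d a (b + 3 * a * t) (c + 2 * b * t + 3 * a * t ^ 2)
      (d + c * t + b * t ^ 2 + a * t ^ 3) :=
  ⟨1, t, 0, 1, Or.inl (by ring), fun x y => by ring⟩

lemma eqv_swap (a b c d : ℤ) : Eqv a b c d d c b a :=
  ⟨0, 1, 1, 0, Or.inr (by ring), fun x y => by ring⟩

/-- Forms whose Hessian is (1,1,1) are (0,1,1,0) or (0,-1,-1,0). -/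
lemma solve (a b c d : ℤ)
    (hD : -27 * a ^ 2 * d ^ 2 + 18 * a * b * c * d + b ^ 2 * c ^ 2
      - 4 * a * c ^ 3 - 4 * b ^ 3 * d = 1)
    (h1 : b ^ 2 - 3 * a * c = 1) (h2 : b * c - 9 * a * d = 1)
    (h3 : c ^ 2 - 3 * b * d = 1) :
    Eqv a b c d 0 1 1 0 := by
  have h4 : (-2 * b ^ 3 + 9 * a * b * c - 27 * a ^ 2 * d) ^ 2 + 27 * a ^ 2 = 4 := by
    linear_combination (4 * ((b ^ 2 - 3 * a * c) ^ 2 + (b ^ 2 - 3 * a * c) + 1)) * h1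
      + (-27) * a ^ 2 * hD
  have ha : a = 0 := by nlinarith [sq_nonneg (-2 * b ^ 3 + 9 * a * b * c - 27 * a ^ 2 * d), sq_nonneg a]
  subst ha
  have hb : b = 1 ∨ b = -1 := by
    have : b * b = 1 := by linarith [h1, sq (b)]; 
    rcases Int.isUnit_iff.mp (IsUnit.of_mul_eq_one b this) with h | h <;> [left; right] <;> exact h
  rcases hb with hb | hb <;> subst hb
  · have hc : c = 1 := by linarith [h2]
    subst hc
    have hd : d = 0 := by linarith [h3]
    subst hd
    exact ⟨1, 0, 0, 1, Or.inl (by ring), fun x y => by ring⟩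
  · have hc : c = -1 := by linarith [h2]
    subst hc
    have hd : d = 0 := by linarith [h3]
    subst hd
    exact ⟨-1, 0, 0, -1, Or.inl (by ring), fun x y => by ring⟩

/-- Quadratic reduction step: find a translation making the last coefficient small. -/
lemma reduce_step (P Q R : ℤ) (hP : 2 ≤ P) (h : Q ^ 2 - 4 * P * R = -3) :
    ∃ t : ℤ, 1 ≤ P * t ^ 2 + Q * t + R ∧ P * t ^ 2 + Q * t + R < P := by
  refine ⟨-((Q + P) / (2 * P)), ?_, ?_⟩ <;>
  · have h2P : 0 < 2 * P := by linarith
    have hm0 : 0 ≤ (Q + P) % (2 * P) := Int.emod_nonneg _ (by omega)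
    have hm1 : (Q + P) % (2 * P) < 2 * P := Int.emod_lt_of_pos _ h2P
    have hdiv : 2 * P * ((Q + P) / (2 * P)) + (Q + P) % (2 * P) = Q + P :=
      Int.mul_ediv_add_emod _ _
    set t : ℤ := -((Q + P) / (2 * P)) with ht
    have hQ' : Q + 2 * P * t = (Q + P) % (2 * P) - P := by
      rw [ht]; linarith [hdiv]
    have hsyz : (Q + 2 * P * t) ^ 2 - 4 * P * (P * t ^ 2 + Q * t + R) = -3 := by
      linear_combination h
    have hb : (Q + 2 * P * t) ^ 2 ≤ P ^ 2 := by
      rw [hQ']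
      nlinarith [hm0, hm1]
    nlinarith [hsyz, hb, sq_nonneg (Q + 2 * P * t)]

lemma final_k (Q R : ℤ) (h : Q ^ 2 - 4 * R = -3) :
    ∃ k : ℤ, Q = 2 * k + 1 ∧ R = k ^ 2 + k + 1 := by
  rcases Int.even_or_odd Q with ⟨j, hj⟩ | ⟨j, hj⟩
  · exfalso
    subst hj
    have : (j + j) ^ 2 = 4 * j ^ 2 := by ring
    omega
  · refine ⟨j, hj, by nlinarith [h, hj]⟩

lemma descent : ∀ n : ℕ, ∀ a b c d : ℤ,
    -27 * a ^ 2 * d ^ 2 + 18 * a * b * c * d + b ^ 2 * c ^ 2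
      - 4 * a * c ^ 3 - 4 * b ^ 3 * d = 1 →
    b ^ 2 - 3 * a * c ≤ (n : ℤ) → Eqv a b c d 0 1 1 0 := by
  intro n
  induction n using Nat.strong_induction_on with
  | _ n ih =>
    intro a b c d hD hn
    have hsyz : (b * c - 9 * a * d) ^ 2
        - 4 * (b ^ 2 - 3 * a * c) * (c ^ 2 - 3 * b * d) = -3 := by
      linear_combination (-3) * hD
    have hcube : 4 * (b ^ 2 - 3 * a * c) ^ 3
        = (-2 * b ^ 3 + 9 * a * b * c - 27 * a ^ 2 * d) ^ 2 + 27 * a ^ 2 := by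
      linear_combination 27 * a ^ 2 * hD
    have hP0 : 0 ≤ b ^ 2 - 3 * a * c := by
      nlinarith [sq_nonneg (-2 * b ^ 3 + 9 * a * b * c - 27 * a ^ 2 * d), sq_nonneg a,
        sq_nonneg (b ^ 2 - 3 * a * c), sq_nonneg (b ^ 2 - 3 * a * c + 1),
        sq_nonneg (b ^ 2 - 3 * a * c - 1)]
    have hP1 : 1 ≤ b ^ 2 - 3 * a * c := by
      rcases lt_or_eq_of_le hP0 with h | h
      · omega
      · exfalso
        have hq : (b * c - 9 * a * d) ^ 2 = -3 := by
          linear_combination hsyz + (-4) * (c ^ 2 - 3 * b * d) * h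
        linarith [sq_nonneg (b * c - 9 * a * d), hq]
    rcases lt_or_ge (b ^ 2 - 3 * a * c) 2 with hPlt | hPge
    · -- P = 1 case
      have hPone : b ^ 2 - 3 * a * c = 1 := by omega
      have hq : (b * c - 9 * a * d) ^ 2 - 4 * (c ^ 2 - 3 * b * d) = -3 := by
        linear_combination hsyz + 4 * (c ^ 2 - 3 * b * d) * hPone
      obtain ⟨k, hk1, hk2⟩ := final_k _ _ hq
      have step := eqv_T a b c d (-k)
      refine eqv_trans step (solve _ _ _ _ ?_ ?_ ?_ ?_)
      · linear_combination hD
      · linear_combination hPone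
      · linear_combination hk1 + (-2 * k) * hPone
      · linear_combination k ^ 2 * hPone + (-k) * hk1 + hk2
    · -- P ≥ 2 case
      obtain ⟨t, hR1, hR2⟩ := reduce_step (b ^ 2 - 3 * a * c) (b * c - 9 * a * d)
        (c ^ 2 - 3 * b * d) hPge hsyz
      have step := eqv_T a b c d t
      have swap := eqv_swap a (b + 3 * a * t) (c + 2 * b * t + 3 * a * t ^ 2)
        (d + c * t + b * t ^ 2 + a * t ^ 3)
      have hn1 : 1 ≤ n := by
        have : (1 : ℤ) ≤ (n : ℤ) := by linarith
        exact_mod_cast this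
      have htail := ih (n - 1) (by omega)
        (d + c * t + b * t ^ 2 + a * t ^ 3) (c + 2 * b * t + 3 * a * t ^ 2)
        (b + 3 * a * t) a
        (by linear_combination hD)
        (by
          have hcast : ((n - 1 : ℕ) : ℤ) = (n : ℤ) - 1 := by
            push_cast [Nat.cast_sub hn1]; ring
          rw [hcast]
          have hid : (c + 2 * b * t + 3 * a * t ^ 2) ^ 2
              - 3 * (d + c * t + b * t ^ 2 + a * t ^ 3) * (b + 3 * a * t)
              = (b ^ 2 - 3 * a * c) * t ^ 2 + (b * c - 9 * a * d) * t
                + (c ^ 2 - 3 * b * d) := by ring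
          rw [hid]
          omega)
      exact eqv_trans step (eqv_trans swap htail)

/-- A binary cubic form of discriminant 1 is GL₂(ℤ)-equivalent to
xy(x+y) or xy(x-y). -/
theorem stmt_7 (a b c d : ℤ)
    (hD : -27 * a ^ 2 * d ^ 2 + 18 * a * b * c * d + b ^ 2 * c ^ 2
      - 4 * a * c ^ 3 - 4 * b ^ 3 * d = 1) :
    ∃ p q r s : ℤ, (p * s - q * r = 1 ∨ p * s - q * r = -1) ∧
      ((∀ x y : ℤ,
          a * (p * x + q * y) ^ 3 + b * (p * x + q * y) ^ 2 * (r * x + s * y)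
            + c * (p * x + q * y) * (r * x + s * y) ^ 2
            + d * (r * x + s * y) ^ 3 = x ^ 2 * y + x * y ^ 2) ∨
       (∀ x y : ℤ,
          a * (p * x + q * y) ^ 3 + b * (p * x + q * y) ^ 2 * (r * x + s * y)
            + c * (p * x + q * y) * (r * x + s * y) ^ 2
            + d * (r * x + s * y) ^ 3 = x ^ 2 * y - x * y ^ 2)) := by
  obtain ⟨p, q, r, s, hdet, hfun⟩ :=
    descent (b ^ 2 - 3 * a * c).toNat a b c d hD (Int.self_le_toNat _)
  exact ⟨p, q, r, s, hdet, Or.inl fun x y => by linear_combination hfun x y⟩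
end

section
/- Let a, b, c, d be integers with a ≠ 0 whose binary cubic form has discriminant D > 0. Then b^2 - 3*a*c > 0, and the quadratic covariant H(x,y) = (b^2 - 3*a*c)*x^2 + (b*c - 9*a*d)*x*y + (c^2 - 3*b*d)*y^2 is positive definite: H(x,y) > 0 for every pair of integers (x, y) ≠ (0, 0). -/
/-- For a binary cubic form with a ≠ 0 and positive discriminant, the
quadratic covariant H is positive definite. -/
theorem stmt_8 (a b c d : ℤ) (ha : a ≠ 0)
    (hD : 0 < -27 * a ^ 2 * d ^ 2 + 18 * a * b * c * d + b ^ 2 * c ^ 2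
      - 4 * a * c ^ 3 - 4 * b ^ 3 * d) :
    0 < b ^ 2 - 3 * a * c ∧
      ∀ x y : ℤ, ¬ (x = 0 ∧ y = 0) →
        0 < (b ^ 2 - 3 * a * c) * x ^ 2 + (b * c - 9 * a * d) * x * y
          + (c ^ 2 - 3 * b * d) * y ^ 2 := by
  have ha2 : 0 < a ^ 2 := by positivity
  have hP : 0 < b ^ 2 - 3 * a * c := by
    nlinarith [sq_nonneg (2 * b ^ 3 - 9 * a * b * c + 27 * a ^ 2 * d),
      sq_nonneg (b ^ 2 - 3 * a * c), mul_pos ha2 hD,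
      sq_nonneg (b ^ 2 - 3 * a * c + 1), sq_nonneg (b ^ 2 - 3 * a * c - 1)]
  refine ⟨hP, fun x y hxy => ?_⟩
  rcases eq_or_ne y 0 with hy | hy
  · have hx : x ≠ 0 := fun hx => hxy ⟨hx, hy⟩
    have : 0 < x ^ 2 := by positivity
    subst hy
    nlinarith [mul_pos hP this]
  · have hy2 : 0 < y ^ 2 := by positivity
    nlinarith [sq_nonneg (2 * (b ^ 2 - 3 * a * c) * x + (b * c - 9 * a * d) * y),
      mul_pos hD hy2, hP]
end

section
/- Let u, v, w be pairwise coprime nonzero integers satisfying u^3 + 3*v^3 + 3*w^3 = 6*u*v*w. Then 9 divides u. -/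
lemma aux_dvd3 (x : ℤ) (h : (3 : ZMod 9) ∣ (x : ZMod 9)) : (3 : ℤ) ∣ x := by
  obtain ⟨k, hk⟩ := h
  obtain ⟨m, rfl⟩ := ZMod.intCast_surjective k
  have h9 : (9 : ℤ) ∣ x - 3 * m := by
    have : ((x - 3 * m : ℤ) : ZMod 9) = 0 := by push_cast; rw [hk]; ring
    exact (ZMod.intCast_zmod_eq_zero_iff_dvd _ 9).mp this
  have h3 : (3 : ℤ) ∣ x - 3 * m := dvd_trans (by norm_num) h9
  have := dvd_add h3 (Dvd.intro m rfl)
  simpa using this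

lemma aux_key : ∀ a b c : ZMod 9, 9 * a ^ 3 + b ^ 3 + c ^ 3 = 6 * a * b * c →
    ¬ (∃ k, b = 3 * k) → ¬ (∃ k, c = 3 * k) → ∃ k, a = 3 * k := by decide

/-- If pairwise coprime nonzero integers satisfy u³ + 3v³ + 3w³ = 6uvw,
then 9 divides u. -/
theorem stmt_11 (u v w : ℤ) (hu : u ≠ 0) (hv : v ≠ 0) (hw : w ≠ 0)
    (huv : Int.gcd u v = 1) (hvw : Int.gcd v w = 1) (huw : Int.gcd u w = 1)
    (heq : u ^ 3 + 3 * v ^ 3 + 3 * w ^ 3 = 6 * u * v * w) :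
    (9 : ℤ) ∣ u := by
  have h3u : (3 : ℤ) ∣ u := by
    have h : (3 : ℤ) ∣ u ^ 3 := ⟨2 * u * v * w - v ^ 3 - w ^ 3, by linarith⟩
    exact Int.Prime.dvd_pow' (by norm_num) h
  have h3v : ¬ (3 : ℤ) ∣ v := by
    intro h
    have := Int.dvd_gcd h3u h
    rw [huv] at this
    norm_num at this
  have h3w : ¬ (3 : ℤ) ∣ w := by
    intro h
    have := Int.dvd_gcd h3u h
    rw [huw] at this
    norm_num at this
  obtain ⟨t, rfl⟩ := h3u
  have heq2 : 9 * t ^ 3 + v ^ 3 + w ^ 3 = 6 * t * v * w := by nlinarith [heq]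
  have hz : (9 : ZMod 9) * (t : ZMod 9) ^ 3 + (v : ZMod 9) ^ 3 + (w : ZMod 9) ^ 3
      = 6 * (t : ZMod 9) * (v : ZMod 9) * (w : ZMod 9) := by
    have := congrArg (fun x : ℤ => (x : ZMod 9)) heq2
    push_cast at this
    exact this
  have hbv : ¬ ((3 : ZMod 9) ∣ (v : ZMod 9)) := fun h => h3v (aux_dvd3 v h)
  have hbw : ¬ ((3 : ZMod 9) ∣ (w : ZMod 9)) := fun h => h3w (aux_dvd3 w h)
  have h3t : (3 : ℤ) ∣ t := aux_dvd3 t (aux_key _ _ _ hz (fun ⟨k,hk⟩ => hbv ⟨k,hk⟩) (fun ⟨k,hk⟩ => hbw ⟨k,hk⟩) |>.elim fun k hk => ⟨k,hk⟩)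
  obtain ⟨s, rfl⟩ := h3t
  exact ⟨s, by ring⟩
end

section
/- Let R, S be integers with gcd(R, S) = 1. Then every prime divisor of gcd(R^2 + 2*S^2, S + 2*R) equals 3, and every prime divisor of gcd(R^2 + 2*S^2, S - 2*R) equals 3; that is, each of these gcds is a power of 3. -/
lemma aux13 (R S : ℤ) (hRS : Int.gcd R S = 1) (T : ℤ)
    (hT : T = S + 2 * R ∨ T = S - 2 * R)
    (p : ℕ) (hp : p.Prime) (h1 : (p : ℤ) ∣ R ^ 2 + 2 * S ^ 2) (h2 : (p : ℤ) ∣ T) :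
    p = 3 := by
  have hpI : Prime (p : ℤ) := Nat.prime_iff_prime_int.mp hp
  have hprod : (p : ℤ) ∣ 2 * (S + 2 * R) * (S - 2 * R) := by
    rcases hT with rfl | rfl
    · exact Dvd.dvd.mul_right (Dvd.dvd.mul_left h2 2) _
    · exact Dvd.dvd.mul_left h2 _
  have h9 : (p : ℤ) ∣ 9 * R ^ 2 := by
    have : 9 * R ^ 2 = (R ^ 2 + 2 * S ^ 2) - 2 * (S + 2 * R) * (S - 2 * R) := by ring
    rw [this]; exact dvd_sub h1 hprod
  rcases hpI.dvd_mul.mp h9 with h | h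
  · have : (p : ℤ) ∣ (3:ℤ) ^ 2 := by norm_num at h ⊢; exact h
    have h3 : (p : ℤ) ∣ 3 := hpI.dvd_of_dvd_pow this
    have : p ∣ 3 := by exact_mod_cast h3
    exact (Nat.prime_dvd_prime_iff_eq hp (by norm_num)).mp this
  · exfalso
    have hR : (p : ℤ) ∣ R := hpI.dvd_of_dvd_pow h
    have hS : (p : ℤ) ∣ S := by
      rcases hT with rfl | rfl
      · have := dvd_sub h2 (hR.mul_left 2); simpa using this
      · have := dvd_add h2 (hR.mul_left 2); simpa using this
    have : (p : ℤ) ∣ (Int.gcd R S : ℤ) := Int.dvd_coe_gcd hR hS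
    rw [hRS] at this
    exact hp.one_lt.ne' (by exact_mod_cast Int.eq_one_of_dvd_one (by positivity) this)

lemma pow3 (n : ℕ) (h : ∀ p : ℕ, p.Prime → p ∣ n → p = 3) : ∃ m, n = 3 ^ m := by
  rcases eq_or_ne n 0 with rfl | hn
  · exact absurd (h 2 Nat.prime_two (dvd_zero 2)) (by norm_num)
  · exact ⟨_, Nat.eq_prime_pow_of_unique_prime_dvd hn (fun {p} hp hd => h p hp hd)⟩

/-- If gcd(R,S) = 1, every prime divisor of gcd(R² + 2S², S ± 2R) is 3,
so each of these gcds is a power of 3. -/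
theorem stmt_13 (R S : ℤ) (hRS : Int.gcd R S = 1) :
    (∀ p : ℕ, p.Prime → p ∣ Int.gcd (R ^ 2 + 2 * S ^ 2) (S + 2 * R) → p = 3) ∧
    (∀ p : ℕ, p.Prime → p ∣ Int.gcd (R ^ 2 + 2 * S ^ 2) (S - 2 * R) → p = 3) ∧
    (∃ m : ℕ, Int.gcd (R ^ 2 + 2 * S ^ 2) (S + 2 * R) = 3 ^ m) ∧
    (∃ m : ℕ, Int.gcd (R ^ 2 + 2 * S ^ 2) (S - 2 * R) = 3 ^ m) := by
  have key1 : ∀ p : ℕ, p.Prime → p ∣ Int.gcd (R ^ 2 + 2 * S ^ 2) (S + 2 * R) → p = 3 := by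
    intro p hp hd
    have hd' : (p : ℤ) ∣ (Int.gcd (R ^ 2 + 2 * S ^ 2) (S + 2 * R) : ℤ) := Int.natCast_dvd_natCast.mpr hd
    exact aux13 R S hRS (S + 2 * R) (Or.inl rfl) p hp
      (hd'.trans (Int.gcd_dvd_left _ _)) (hd'.trans (Int.gcd_dvd_right _ _))
  have key2 : ∀ p : ℕ, p.Prime → p ∣ Int.gcd (R ^ 2 + 2 * S ^ 2) (S - 2 * R) → p = 3 := by
    intro p hp hd
    have hd' : (p : ℤ) ∣ (Int.gcd (R ^ 2 + 2 * S ^ 2) (S - 2 * R) : ℤ) := Int.natCast_dvd_natCast.mpr hd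
    exact aux13 R S hRS (S - 2 * R) (Or.inr rfl) p hp
      (hd'.trans (Int.gcd_dvd_left _ _)) (hd'.trans (Int.gcd_dvd_right _ _))
  exact ⟨key1, key2, pow3 _ key1, pow3 _ key2⟩
end

section
/- For every integer n ≥ 1, the equation X^3 + Y^3 + 3^(3n-1)*Z^3 = 2*3^n*X*Y*Z has no solution in nonzero integers X, Y, Z none of which is divisible by 3. -/
/-- Perrin's family of equations: for every n ≥ 1, the equation
X³ + Y³ + 3^(3n-1)·Z³ = 2·3ⁿ·XYZ has no solution in nonzero integers
none of which is divisible by 3. -/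
theorem stmt_14 (n : ℕ) (hn : 1 ≤ n) :
    ¬ ∃ X Y Z : ℤ, X ≠ 0 ∧ Y ≠ 0 ∧ Z ≠ 0 ∧
      ¬ (3 : ℤ) ∣ X ∧ ¬ (3 : ℤ) ∣ Y ∧ ¬ (3 : ℤ) ∣ Z ∧
      X ^ 3 + Y ^ 3 + 3 ^ (3 * n - 1) * Z ^ 3 = 2 * 3 ^ n * X * Y * Z := by
  rintro ⟨X, Y, Z, hX, hY, hZ, h3X, h3Y, h3Z, heq⟩
  obtain ⟨m, rfl⟩ : ∃ m, n = m + 1 := ⟨n - 1, by omega⟩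
  rw [show 3 * (m + 1) - 1 = 3 * m + 2 from by omega] at heq
  obtain ⟨V, hVdef⟩ : ∃ V : ℤ, V = 3 ^ m * Z := ⟨_, rfl⟩
  have h3 : Prime (3 : ℤ) := Int.prime_three
  have h3ne : (3 : ℤ) ≠ 0 := by norm_num
  have hF : X ^ 3 + Y ^ 3 + 9 * V ^ 3 = 6 * X * Y * V := by
    rw [hVdef]; linear_combination heq
  -- 3 divides X + Y
  have h3s : (3 : ℤ) ∣ X + Y := by
    refine h3.dvd_of_dvd_pow (n := 3) ⟨X * Y * (X + Y) + 2 * X * Y * V - 3 * V ^ 3, ?_⟩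
    linear_combination hF
  have h3d : ¬ (3 : ℤ) ∣ X - Y := by omega
  -- the equation in terms of s = X+Y, d = X-Y
  have hsd : (X + Y) ^ 3 - 6 * V * (X + Y) ^ 2 + 3 * (X + Y) * (X - Y) ^ 2
      + 6 * V * (X - Y) ^ 2 + 36 * V ^ 3 = 0 := by linear_combination 4 * hF
  -- 3^m divides X + Y
  have hdvd : (3 : ℤ) ^ m ∣ X + Y := by
    rcases Nat.eq_zero_or_pos m with hm0 | hm1
    · simp [hm0]
    · suffices h : ∀ k, k + 1 ≤ m → (3 : ℤ) ^ (k + 1) ∣ X + Y by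
        obtain ⟨k, rfl⟩ : ∃ k, m = k + 1 := ⟨m - 1, by omega⟩
        exact h k le_rfl
      intro k
      induction k with
      | zero => intro _; simpa using h3s
      | succ k ih =>
        intro hk2
        obtain ⟨u, hu⟩ := ih (by omega)
        obtain ⟨j, hj⟩ : ∃ j, m = k + 2 + j := ⟨m - (k + 2), by omega⟩
        have hsd' := hsd
        rw [hu, hVdef, hj] at hsd'
        have keyeq : (3 : ℤ) ^ (k + 2) * (u * (X - Y) ^ 2)
            = 3 ^ (k + 2) * (3 * (2 * 3 ^ (2 * k + j + 2) * Z * u ^ 2 - 3 ^ (2 * k) * u ^ 3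
              - 2 * 3 ^ j * Z * (X - Y) ^ 2 - 4 * 3 ^ (2 * k + 3 * j + 5) * Z ^ 3)) := by
          linear_combination hsd'
        have hud : u * (X - Y) ^ 2 = 3 * (2 * 3 ^ (2 * k + j + 2) * Z * u ^ 2
            - 3 ^ (2 * k) * u ^ 3 - 2 * 3 ^ j * Z * (X - Y) ^ 2
            - 4 * 3 ^ (2 * k + 3 * j + 5) * Z ^ 3) :=
          mul_left_cancel₀ (pow_ne_zero _ h3ne) keyeq
        have h3u : (3 : ℤ) ∣ u := by
          rcases h3.dvd_mul.mp ⟨_, hud⟩ with h | h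
          · exact h
          · exact absurd (h3.dvd_of_dvd_pow h) h3d
        obtain ⟨u', hu'⟩ := h3u
        exact ⟨u', by rw [hu, hu']; ring⟩
  obtain ⟨t, ht⟩ := hdvd
  -- 3 does not divide t
  have h3t : ¬ (3 : ℤ) ∣ t := by
    rintro ⟨t', rfl⟩
    have hsd' := hsd
    rw [ht, hVdef] at hsd'
    have keyeq : (3 : ℤ) ^ (m + 1) * ((X - Y) ^ 2 * (3 * t' + 2 * Z))
        = 3 ^ (m + 1) * (3 * (2 * 3 ^ (2 * m + 1) * Z * t' ^ 2 - 3 ^ (2 * m + 1) * t' ^ 3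
          - 4 * 3 ^ (2 * m) * Z ^ 3)) := by
      linear_combination hsd'
    have hdd : (X - Y) ^ 2 * (3 * t' + 2 * Z) = 3 * (2 * 3 ^ (2 * m + 1) * Z * t' ^ 2
        - 3 ^ (2 * m + 1) * t' ^ 3 - 4 * 3 ^ (2 * m) * Z ^ 3) :=
      mul_left_cancel₀ (pow_ne_zero _ h3ne) keyeq
    rcases h3.dvd_mul.mp ⟨_, hdd⟩ with h | h
    · exact absurd (h3.dvd_of_dvd_pow h) h3d
    · omega
  -- 3 does not divide (X-Y) * (2t³+6Zt²-9Z³)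
  have hdh : ¬ (3 : ℤ) ∣ (X - Y) * (2 * t ^ 3 + 6 * Z * t ^ 2 - 9 * Z ^ 3) := by
    intro h
    rcases h3.dvd_mul.mp h with h | h
    · exact h3d h
    · have h2 : (3 : ℤ) ∣ 2 * t ^ 3 := by
        obtain ⟨c, hc⟩ := h
        exact ⟨c - (2 * Z * t ^ 2 - 3 * Z ^ 3), by linear_combination hc⟩
      rcases h3.dvd_mul.mp h2 with h | h
      · omega
      · exact h3t (h3.dvd_of_dvd_pow h)
  -- nonvanishing of A
  have hAne : ∀ ε : ℤ, ε = 1 ∨ ε = -1 →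
      ε * ((X - Y) * (2 * (X + Y) ^ 3 + 6 * V * (X + Y) ^ 2 - 9 * V ^ 3))
        - 27 * V ^ 3 * (X + Y + 2 * V) ≠ 0 := by
    rintro ε hε h0
    rw [ht, hVdef] at h0
    have e : (3 : ℤ) ^ (3 * m) * (ε * ((X - Y) * (2 * t ^ 3 + 6 * Z * t ^ 2 - 9 * Z ^ 3))
        - 3 ^ (m + 3) * (Z ^ 3 * (t + 2 * Z))) = 0 := by
      linear_combination h0
    have e2 : ε * ((X - Y) * (2 * t ^ 3 + 6 * Z * t ^ 2 - 9 * Z ^ 3))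
        - 3 ^ (m + 3) * (Z ^ 3 * (t + 2 * Z)) = 0 :=
      (mul_eq_zero.mp e).resolve_left (pow_ne_zero _ h3ne)
    apply hdh
    have hd3 : (3 : ℤ) ∣ ε * ((X - Y) * (2 * t ^ 3 + 6 * Z * t ^ 2 - 9 * Z ^ 3)) :=
      ⟨3 ^ (m + 2) * (Z ^ 3 * (t + 2 * Z)), by linear_combination e2⟩
    rcases hε with rfl | rfl
    · simpa using hd3
    · obtain ⟨c, hc⟩ := hd3
      exact ⟨-c, by linear_combination -hc⟩
  -- apply Fermat's Last Theorem for exponent 3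
  have flt := fermatLastTheoremFor_iff_int.mp fermatLastTheoremThree
  refine flt ((X - Y) * (2 * (X + Y) ^ 3 + 6 * V * (X + Y) ^ 2 - 9 * V ^ 3)
      - 27 * V ^ 3 * (X + Y + 2 * V))
    (-((X - Y) * (2 * (X + Y) ^ 3 + 6 * V * (X + Y) ^ 2 - 9 * V ^ 3))
      - 27 * V ^ 3 * (X + Y + 2 * V))
    (6 * V * ((X + Y) ^ 3 - 9 * V ^ 2 * (X + Y) - 9 * V ^ 3)) ?_ ?_ ?_ ?_
  · have := hAne 1 (Or.inl rfl); simpa using this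
  · have := hAne (-1) (Or.inr rfl)
    intro h0; apply this; linear_combination h0
  · -- C ≠ 0
    have hg : t ^ 3 - 9 * Z ^ 2 * t - 9 * Z ^ 3 ≠ 0 := by
      intro h0
      have h3t3 : (3 : ℤ) ∣ t ^ 3 := ⟨3 * Z ^ 2 * t + 3 * Z ^ 3, by linear_combination h0⟩
      exact h3t (h3.dvd_of_dvd_pow h3t3)
    have hrw : 6 * V * ((X + Y) ^ 3 - 9 * V ^ 2 * (X + Y) - 9 * V ^ 3)
        = (6 * Z * 3 ^ m * 3 ^ (3 * m)) * (t ^ 3 - 9 * Z ^ 2 * t - 9 * Z ^ 3) := by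
      rw [ht, hVdef]; ring
    rw [hrw]
    exact mul_ne_zero (mul_ne_zero (mul_ne_zero (mul_ne_zero (by norm_num) hZ)
      (pow_ne_zero _ h3ne)) (pow_ne_zero _ h3ne)) hg
  · -- the cube identity
    linear_combination ((-864) * V ^ 3 * (X + Y) ^ 6 + (-5184) * V ^ 4 * (X + Y) ^ 5
      + (-7776) * V ^ 5 * (X + Y) ^ 4 + 7776 * V ^ 6 * (X + Y) ^ 3
      + 23328 * V ^ 7 * (X + Y) ^ 2 + (-17496) * V ^ 9) * hF
end

section
/- Let x, y, z be pairwise coprime nonzero integers with x^3 + y^3 + z^3 = 0. Then 3 divides x*y*z. -/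
lemma cube_ne_zero_mod9 (x : ℤ) (h : ¬ (3:ℤ) ∣ x) :
    ((x : ZMod 9))^3 = 1 ∨ ((x : ZMod 9))^3 = 8 := by
  have key : ∀ a : ZMod 9, a^3 = 0 ∨ a^3 = 1 ∨ a^3 = 8 := by decide
  rcases key (x : ZMod 9) with h0 | h1 | h8
  · exfalso
    have : ((x^3 : ℤ) : ZMod 9) = 0 := by push_cast; exact h0
    have h9 : (9:ℤ) ∣ x^3 := (ZMod.intCast_zmod_eq_zero_iff_dvd _ 9).mp this
    have h3 : (3:ℤ) ∣ x^3 := dvd_trans ⟨3, by norm_num⟩ h9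
    exact h (Int.Prime.dvd_pow' (by norm_num) h3)
  · exact Or.inl h1
  · exact Or.inr h8

/-- If pairwise coprime nonzero integers satisfy x³ + y³ + z³ = 0, then
3 divides xyz. -/
theorem stmt_15 (x y z : ℤ) (hx : x ≠ 0) (hy : y ≠ 0) (hz : z ≠ 0)
    (hxy : Int.gcd x y = 1) (hyz : Int.gcd y z = 1) (hxz : Int.gcd x z = 1)
    (heq : x ^ 3 + y ^ 3 + z ^ 3 = 0) :
    (3 : ℤ) ∣ x * y * z := by
  by_contra h
  have hp : Prime (3:ℤ) := by norm_num
  have h3x : ¬ (3:ℤ) ∣ x := fun hd => h (Dvd.dvd.mul_right (hd.mul_right y) z)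
  have h3y : ¬ (3:ℤ) ∣ y := fun hd => h (Dvd.dvd.mul_right (hd.mul_left x) z)
  have h3z : ¬ (3:ℤ) ∣ z := fun hd => h (hd.mul_left (x*y))
  have hcast : ((x:ZMod 9))^3 + ((y:ZMod 9))^3 + ((z:ZMod 9))^3 = 0 := by
    have : (((x^3 + y^3 + z^3 : ℤ)) : ZMod 9) = 0 := by rw [heq]; simp
    push_cast at this; exact this
  rcases cube_ne_zero_mod9 x h3x with hx9 | hx9 <;>
  rcases cube_ne_zero_mod9 y h3y with hy9 | hy9 <;>
  rcases cube_ne_zero_mod9 z h3z with hz9 | hz9 <;>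
  rw [hx9, hy9, hz9] at hcast <;> revert hcast <;> decide
end

section
/- Let x, y, z be pairwise coprime nonzero integers with x^3 + y^3 + z^3 = 0 and 3 ∣ z. Then there exist integers u and U with 3*(x + y) = u^3, x^2 - x*y + y^2 = 3*U^3, and z = -u*U. -/
/-- Factorization in the case 3 ∣ z: 3(x+y) and (x²-xy+y²)/3 are coprime
cubes. -/
theorem stmt_16 (x y z : ℤ) (hx : x ≠ 0) (hy : y ≠ 0) (hz : z ≠ 0)
    (hxy : Int.gcd x y = 1) (hyz : Int.gcd y z = 1) (hxz : Int.gcd x z = 1)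
    (heq : x ^ 3 + y ^ 3 + z ^ 3 = 0) (h3 : (3 : ℤ) ∣ z) :
    ∃ u U : ℤ, 3 * (x + y) = u ^ 3 ∧ x ^ 2 - x * y + y ^ 2 = 3 * U ^ 3 ∧
      z = -(u * U) := by
  -- 3 ∣ x + y
  have h3xy : (3 : ℤ) ∣ x + y := by
    have : ((x + y : ℤ) : ZMod 3) = 0 := by
      have hc : ((x ^ 3 + y ^ 3 + z ^ 3 : ℤ) : ZMod 3) = 0 := by rw [heq]; simp
      have hzz : ((z : ℤ) : ZMod 3) = 0 := by
        exact_mod_cast (ZMod.intCast_zmod_eq_zero_iff_dvd z 3).mpr h3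
      push_cast at hc ⊢
      rw [hzz] at hc
      have hcube : ∀ a : ZMod 3, a ^ 3 = a := by decide
      rw [hcube, hcube] at hc
      simpa using hc
    exact (ZMod.intCast_zmod_eq_zero_iff_dvd _ 3).mp this
  have h3x : ¬ (3 : ℤ) ∣ x := by
    intro hdx
    have hdy : (3 : ℤ) ∣ y := by
      have := dvd_sub h3xy hdx
      simpa using this
    have : (3 : ℤ) ∣ Int.gcd x y := Int.dvd_coe_gcd hdx hdy
    rw [hxy] at this
    norm_num at this
  have h3y : ¬ (3 : ℤ) ∣ y := by
    intro hdy
    have hdx : (3 : ℤ) ∣ x := by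
      have := dvd_sub h3xy hdy
      have h2 : (3 : ℤ) ∣ x := by simpa using this
      exact h2
    have : (3 : ℤ) ∣ Int.gcd x y := Int.dvd_coe_gcd hdx hdy
    rw [hxy] at this
    norm_num at this
  obtain ⟨t, ht⟩ := h3xy
  set Q' : ℤ := 3 * t ^ 2 - x * y with hQ'
  have hQeq : x ^ 2 - x * y + y ^ 2 = 3 * Q' := by
    have : (x + y) ^ 2 = (3 * t) ^ 2 := by rw [ht]
    nlinarith [this]
  have h3Q' : ¬ (3 : ℤ) ∣ Q' := by
    intro hd
    have hxy3 : (3 : ℤ) ∣ x * y := by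
      have := dvd_sub (Dvd.intro (t ^ 2) rfl) hd
      simpa [hQ'] using this
    rcases (Int.Prime.dvd_mul' Nat.prime_three (by exact_mod_cast hxy3)) with h | h
    · exact h3x (by exact_mod_cast h)
    · exact h3y (by exact_mod_cast h)
  -- coprimality of 3*(x+y) and Q'
  have hcop : IsCoprime (3 * (x + y)) Q' := by
    rw [Int.isCoprime_iff_gcd_eq_one]
    by_contra hg
    obtain ⟨p, hp, hpd⟩ := Nat.exists_prime_and_dvd hg
    have hp1 : (p : ℤ) ∣ 3 * (x + y) :=
      (Int.natCast_dvd_natCast.mpr hpd).trans (Int.gcd_dvd_left _ _)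
    have hp2 : (p : ℤ) ∣ Q' :=
      (Int.natCast_dvd_natCast.mpr hpd).trans (Int.gcd_dvd_right _ _)
    rcases Int.Prime.dvd_mul' hp hp1 with hp3 | hpa
    · -- p ∣ 3, so p = 3
      have hp3' : p ∣ 3 := by exact_mod_cast hp3
      have : p = 3 := (Nat.prime_dvd_prime_iff_eq hp Nat.prime_three).mp hp3'
      subst this
      exact h3Q' (by exact_mod_cast hp2)
    · -- p ∣ x + y = 3t
      have hpne3 : (p : ℤ) ≠ 3 := by
        intro h
        have : p = 3 := by exact_mod_cast h
        subst this
        exact h3Q' (by exact_mod_cast hp2)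
      have hpp : Prime (p : ℤ) := Nat.prime_iff_prime_int.mp hp
      have hpt : (p : ℤ) ∣ t := by
        rw [ht] at hpa
        rcases hpp.dvd_mul.mp hpa with h | h
        · have h3' : p ∣ 3 := by exact_mod_cast h
          exact absurd (by exact_mod_cast (Nat.prime_dvd_prime_iff_eq hp Nat.prime_three).mp h3')
            hpne3
        · exact h
      have hpxy : (p : ℤ) ∣ x * y := by
        have h1 : (p : ℤ) ∣ 3 * t ^ 2 := Dvd.dvd.mul_left (dvd_pow hpt two_ne_zero) 3
        have h2 : x * y = 3 * t ^ 2 - Q' := by rw [hQ']; ring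
        rw [h2]
        exact dvd_sub h1 hp2
      rcases hpp.dvd_mul.mp hpxy with h | h
      · have hpy : (p : ℤ) ∣ y := by
          have := dvd_sub hpa h
          simpa using this
        have : (p : ℤ) ∣ Int.gcd x y := Int.dvd_coe_gcd h hpy
        rw [hxy] at this
        have := Int.le_of_dvd (by norm_num) this
        have := hp.two_le
        omega
      · have hpx : (p : ℤ) ∣ x := by
          have := dvd_sub hpa h
          simpa using this
        have : (p : ℤ) ∣ Int.gcd x y := Int.dvd_coe_gcd hpx h
        rw [hxy] at this
        have := Int.le_of_dvd (by norm_num) this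
        have := hp.two_le
        omega
  -- (-z)^3 = (3*(x+y)) * Q'
  have hcube : (3 * (x + y)) * Q' = (-z) ^ 3 := by
    have : x ^ 3 + y ^ 3 = (x + y) * (x ^ 2 - x * y + y ^ 2) := by ring
    rw [hQeq] at this
    nlinarith [heq]
  obtain ⟨u, hu⟩ := Int.eq_pow_of_mul_eq_pow_odd_left hcop (by decide : Odd 3) hcube
  obtain ⟨U, hU⟩ := Int.eq_pow_of_mul_eq_pow_odd_right hcop (by decide : Odd 3) hcube
  refine ⟨u, U, hu, by rw [hQeq, hU], ?_⟩
  have : (u * U) ^ 3 = (-z) ^ 3 := by rw [← hcube, hu, hU]; ring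
  have huU : u * U = -z := by
    nlinarith [sq_nonneg (u * U + z), sq_nonneg (u * U - z), sq_nonneg (u*U), sq_nonneg z]
  omega
end
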